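/- With V = V_k ⊗ W, m ≥ 2, k ≥ 3, and ωᵢ as above, let ∂¹ : Hom(V, sl(2,ℝ)×gl(m,ℝ)) → Hom(Λ²V, V) be the first Spencer operator and π_W : Hom(Λ²V, V) → Hom(Λ²V, V/F) ≅ Hom(Λ²V, W) the projection modulo F = ⟨v¹,…,v^k⟩⊗W. Then no nonzero linear combination of the elements π_W(∂¹ωᵢ), i = 1,…,m, lies in the kernel of the restriction map Hom(Λ²V, W) → Hom(Λ²F, W). -/

import Mathlib

/-!
Test the combination on `u = v¹ ⊗ eⱼ` and `v = vᵏ ⊗ eⱼ`. Then `ωᵢ(v) = k(k−1)δᵢⱼ y`,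
while `ωᵢ(u)` is a multiple of `x` (nonzero only for `k = 3`), which kills `vᵏ`.
Hence the `v⁰ ⊗ eⱼ`-component of `∑ tᵢ ∂¹ωᵢ(u, v)` is `k(k−1) tⱼ (y u)₀ⱼ = k²(k−1) tⱼ`,
forcing `tⱼ = 0`.
-/

/-- The basis vector `v^i ⊗ e_j` of `V = V_k ⊗ W`, modelled as
`Fin (k+1) → Fin m → ℝ`. -/
noncomputable def basisVec (k m : ℕ) (i : Fin (k + 1)) (j : Fin m) :
    Fin (k + 1) → Fin m → ℝ :=
  Pi.single i (Pi.single j 1)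

/-- The coordinate functional on `V = V_k ⊗ W` picking the coefficient of
`v^a ⊗ e_b`. -/
noncomputable def coordFn (k m : ℕ) (a : Fin (k + 1)) (b : Fin m) :
    (Fin (k + 1) → Fin m → ℝ) →ₗ[ℝ] ℝ :=
  (LinearMap.proj (R := ℝ) (φ := fun _ : Fin m => ℝ) b).comp
    (LinearMap.proj (R := ℝ) (φ := fun _ : Fin (k + 1) => Fin m → ℝ) a)

/-- `ωᵢ = 2 (v^{k−2}⊗eᵢ)* ⊗ x + (k−1) (v^{k−1}⊗eᵢ)* ⊗ h + k(k−1) (v^k⊗eᵢ)* ⊗ y`,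
realised as a map `V → gl(V)` through the `sl(2)`-action `X, H, Y` on `V`. -/
noncomputable def omegaOp (k m : ℕ) (hk : 3 ≤ k)
    (X H Y : Module.End ℝ (Fin (k + 1) → Fin m → ℝ)) (i : Fin m) :
    (Fin (k + 1) → Fin m → ℝ) →ₗ[ℝ] Module.End ℝ (Fin (k + 1) → Fin m → ℝ) :=
  (2 : ℝ) • (coordFn k m (⟨k - 2, by omega⟩ : Fin (k + 1)) i).smulRight X +
  ((k : ℝ) - 1) • (coordFn k m (⟨k - 1, by omega⟩ : Fin (k + 1)) i).smulRight H +
  ((k : ℝ) * ((k : ℝ) - 1)) • (coordFn k m (⟨k, by omega⟩ : Fin (k + 1)) i).smulRight Y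

section

variable {k m : ℕ}

lemma coordFn_apply (a : Fin (k + 1)) (b : Fin m) (w : Fin (k + 1) → Fin m → ℝ) :
    coordFn k m a b w = w a b :=
  rfl

lemma basisVec_apply (i a : Fin (k + 1)) (j b : Fin m) :
    basisVec k m i j a b = if a = i ∧ b = j then 1 else 0 := by
  by_cases ha : a = i <;> by_cases hb : b = j <;> simp [basisVec, ha, hb]

lemma omegaOp_apply (hk : 3 ≤ k) (X H Y : Module.End ℝ (Fin (k + 1) → Fin m → ℝ))
    (i : Fin m) (u : Fin (k + 1) → Fin m → ℝ) :
    omegaOp k m hk X H Y i u =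
      (2 * u ⟨k - 2, by omega⟩ i) • X + ((k - 1) * u ⟨k - 1, by omega⟩ i) • H +
        (k * (k - 1) * u (Fin.last k) i) • Y := by
  simp only [omegaOp, LinearMap.add_apply, LinearMap.smul_apply, LinearMap.smulRight_apply,
    coordFn_apply, smul_smul]
  rfl

lemma omegaOp_basisVec_last (hk : 3 ≤ k) (X H Y : Module.End ℝ (Fin (k + 1) → Fin m → ℝ))
    (i j : Fin m) :
    omegaOp k m hk X H Y i (basisVec k m (Fin.last k) j) =
      (k * (k - 1) * if i = j then 1 else 0 : ℝ) • Y := by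
  have h2 : k - 2 ≠ k := by omega
  have h1 : k - 1 ≠ k := by omega
  simp [omegaOp_apply, basisVec_apply, Fin.ext_iff, h1, h2]

lemma omegaOp_basisVec_one (hk : 3 ≤ k) (X H Y : Module.End ℝ (Fin (k + 1) → Fin m → ℝ))
    (i j : Fin m) :
    ∃ c : ℝ, omegaOp k m hk X H Y i (basisVec k m ⟨1, by omega⟩ j) = c • X := by
  refine ⟨2 * basisVec k m ⟨1, by omega⟩ j ⟨k - 2, by omega⟩ i, ?_⟩
  have h2 : k ≠ 2 := by omega
  have h1 : k ≠ 1 := by omega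
  simp [omegaOp_apply, basisVec_apply, Fin.ext_iff, h1, h2]

lemma omegaOp_sub_omegaOp_basisVec_last_one (hk : 3 ≤ k)
    (X H Y : Module.End ℝ (Fin (k + 1) → Fin m → ℝ)) (i j : Fin m)
    (hX : X (basisVec k m (Fin.last k) j) = 0) :
    omegaOp k m hk X H Y i (basisVec k m (Fin.last k) j) (basisVec k m ⟨1, by omega⟩ j) -
        omegaOp k m hk X H Y i (basisVec k m ⟨1, by omega⟩ j) (basisVec k m (Fin.last k) j) =
      (k * (k - 1) * if i = j then 1 else 0 : ℝ) • Y (basisVec k m ⟨1, by omega⟩ j) := by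
  obtain ⟨c, hc⟩ := omegaOp_basisVec_one hk X H Y i j
  simp only [omegaOp_basisVec_last, hc, LinearMap.smul_apply, hX, smul_zero, sub_zero]
end

/-- With `V = V_k ⊗ W` (`m ≥ 2`, `k ≥ 3`), the `sl(2)`-generators
`X, H, Y` acting on `V`, and `ωᵢ` as in Statement 15, let
`∂¹ωᵢ(u,v) = ωᵢ(v)·u − ωᵢ(u)·v` be the first Spencer operator and `π_W` the
projection modulo `F = ⟨v¹,…,v^k⟩ ⊗ W` (taking the `v⁰`-component).  Then no
nonzero linear combination of the `π_W(∂¹ωᵢ)` vanishes upon restriction to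
`Λ²F`: if `∑ tᵢ·π_W(∂¹ωᵢ)(u, v) = 0` for all `u, v ∈ F`, then `t = 0`. -/
theorem no_combination_of_spencer_images_in_ker_alpha
    (k m : ℕ) (hk : 3 ≤ k)
    (X H Y : Module.End ℝ (Fin (k + 1) → Fin m → ℝ))
    (hX : ∀ (i : Fin (k + 1)) (j : Fin m), X (basisVec k m i j) =
      if h : (i : ℕ) < k then basisVec k m (⟨(i : ℕ) + 1, by omega⟩ : Fin (k + 1)) j else 0)
    (hY : ∀ (i : Fin (k + 1)) (j : Fin m), Y (basisVec k m i j) =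
      if h : 0 < (i : ℕ) then
        (((i : ℕ) : ℝ) * ((k : ℝ) + 1 - (i : ℕ))) •
          basisVec k m (⟨(i : ℕ) - 1, by omega⟩ : Fin (k + 1)) j else 0)
    (t : Fin m → ℝ)
    (hvanish : ∀ u v : Fin (k + 1) → Fin m → ℝ, u 0 = 0 → v 0 = 0 →
      (∑ i : Fin m, t i •
        (omegaOp k m hk X H Y i v u - omegaOp k m hk X H Y i u v)) 0 = 0) :
    t = 0 := by
  funext j
  have hXv : X (basisVec k m (Fin.last k) j) = 0 := by simpa using hX (Fin.last k) j
  have hYu : Y (basisVec k m ⟨1, by omega⟩ j) 0 j = k := by simp [hY, basisVec_apply]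
  have hu0 : basisVec k m ⟨1, by omega⟩ j 0 = 0 := by ext b; simp [basisVec_apply, Fin.ext_iff]
  have hv0 : basisVec k m (Fin.last k) j 0 = 0 := by
    ext b; simp [basisVec_apply, Fin.ext_iff]; omega
  have hj := congrFun (hvanish _ _ hu0 hv0) j
  simp only [omegaOp_sub_omegaOp_basisVec_last_one hk X H Y _ j hXv, smul_smul,
    ← Finset.sum_smul, mul_ite, mul_one, mul_zero, Finset.sum_ite_eq', Finset.mem_univ,
    if_true] at hj
  rw [Pi.smul_apply, Pi.smul_apply, hYu, smul_eq_mul, mul_assoc] at hj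
  have hk3 : (3 : ℝ) ≤ k := by exact_mod_cast hk
  have hcoeff : 0 < (k : ℝ) * (k - 1) * k :=
    mul_pos (mul_pos (by linarith) (by linarith)) (by linarith)
  exact (mul_eq_zero.mp hj).resolve_right hcoeff.ne'
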